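/- Let ξ > 0, c > 0, and let α : [1,∞) → ℝ be measurable, integrable on compact subintervals, with α(t) → 0 as t → ∞. Define Q(u) = (1−u)^{−ξ} · c · exp(∫_1^{1/(1−u)} α(t)/t dt) for u ∈ (0,1). Then as τ → 1 from the left: (1−τ)^{−1} · ∫_τ^1 log(Q(u)/Q(τ)) du → ξ and (1−τ)^{−1} · ∫_τ^1 (log(Q(u)/Q(τ)))² du → 2ξ². -/

import Mathlib

/-!
Write `s = 1 - τ` and `L(u) = log (s / (1 - u))` for `τ < u < 1`. The normalized Karamata
representation gives `log (Q u / Q τ) = ξ L(u) + ∫_{1/s}^{1/(1-u)} α(t)/t dt`, and once `|α| ≤ ε`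
on `[1/s, ∞)` the remainder is at most `ε L(u)` in absolute value. The substitution
`u = 1 - s w` turns `L` into `-log w`, whose first two moments on `(0, 1)` are `1` and `2`, so
`s⁻¹ ∫_τ^1 log (Q u / Q τ) du` is within `ε` of `ξ` and `s⁻¹ ∫_τ^1 log² (Q u / Q τ) du` is within
`2 (2ξ + ε) ε` of `2ξ²`; finally `ε → 0` as `τ → 1⁻` because `α → 0`.
-/

open MeasureTheory Real Filter Set Topology

theorem one_le_one_div_one_sub {u : ℝ} (h0 : 0 ≤ u) (h1 : u < 1) : 1 ≤ 1 / (1 - u) := by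
  rw [le_div_iff₀ (by linarith)]; linarith

theorem IntervalIntegrable.div_id {α : ℝ → ℝ} {a b : ℝ} (hα : IntervalIntegrable α volume a b)
    (h0 : (0:ℝ) ∉ uIcc a b) : IntervalIntegrable (fun t => α t / t) volume a b := by
  simpa only [div_eq_mul_inv] using
    hα.mul_continuousOn (continuousOn_inv₀.mono fun t ht => ne_of_mem_of_not_mem ht h0)

theorem continuousOn_primitive_Ici {f : ℝ → ℝ} {a : ℝ}
    (hf : ∀ b, a ≤ b → IntervalIntegrable f volume a b) :
    ContinuousOn (fun x => ∫ t in a..x, f t) (Ici a) := by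
  intro x hx
  have hax : a ≤ x + 1 := by linarith [mem_Ici.1 hx]
  have hcont := intervalIntegral.continuousOn_primitive_interval' (hf _ hax) left_mem_uIcc
  rw [uIcc_of_le hax] at hcont
  refine (hcont x ⟨hx, by linarith⟩).mono_of_mem_nhdsWithin ?_
  rw [← Ici_inter_Iic]
  exact inter_mem_nhdsWithin _ (Iic_mem_nhds (lt_add_one x))

theorem abs_integral_div_self_le {α : ℝ → ℝ} {p q ε : ℝ} (hp : 0 < p) (hpq : p ≤ q)
    (hα : ∀ t ∈ Icc p q, |α t| ≤ ε) : |∫ t in p..q, α t / t| ≤ ε * log (q / p) := by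
  have hinv : IntervalIntegrable (fun t => ε * t⁻¹) volume p q := by
    refine (intervalIntegral.intervalIntegrable_inv (fun t ht => ?_) continuousOn_id).const_mul ε
    exact (hp.trans_le (uIcc_of_le hpq ▸ ht).1).ne'
  have hbound : ∀ t ∈ Ioc p q, ‖α t / t‖ ≤ ε * t⁻¹ := fun t ht => by
    have ht0 : 0 < t := hp.trans ht.1
    rw [norm_div, norm_of_nonneg ht0.le, div_eq_mul_inv]
    exact mul_le_mul_of_nonneg_right (hα t (Ioc_subset_Icc_self ht)) (inv_nonneg.2 ht0.le)
  calc |∫ t in p..q, α t / t| ≤ ∫ t in p..q, ε * t⁻¹ :=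
        intervalIntegral.norm_integral_le_of_norm_le hpq (ae_of_all _ hbound) hinv
    _ = ε * log (q / p) := by
        rw [intervalIntegral.integral_const_mul, integral_inv_of_pos hp (hp.trans_le hpq)]

theorem integral_log_sq_zero_one : ∫ w in (0:ℝ)..1, log w ^ 2 = 2 := by
  set G : ℝ → ℝ := fun w => w * log w ^ 2 - 2 * (w * log w) + 2 * w
  have hG : ContinuousOn G (Icc 0 1) := by
    -- `w log² w = 4 (√w log √w)²` for `w ≥ 0` exhibits its continuity at `0`
    have hsq : EqOn (fun w => 4 * (√w * log √w) ^ 2) (fun w => w * log w ^ 2) (Icc 0 1) :=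
      fun w hw => by
        simp only
        rw [log_sqrt hw.1, mul_pow, sq_sqrt hw.1]
        ring
    refine ContinuousOn.add (ContinuousOn.sub ?_ ?_) (by fun_prop)
    · exact (((continuous_mul_log.comp continuous_sqrt).pow 2).const_mul 4).continuousOn.congr
        hsq.symm
    · exact (continuous_mul_log.const_mul 2).continuousOn
  have hderiv : ∀ w ∈ Ioo (0:ℝ) 1, HasDerivAt G (log w ^ 2) w := by
    intro w hw
    have hw0 : w ≠ 0 := hw.1.ne'
    refine ((((hasDerivAt_id' w).mul ((hasDerivAt_log hw0).pow 2)).sub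
      ((hasDerivAt_mul_log hw0).const_mul 2)).add ((hasDerivAt_id' w).const_mul 2)).congr_deriv ?_
    simp only [Pi.pow_apply]
    field_simp
    ring
  have hint : IntervalIntegrable (fun w => log w ^ 2) volume 0 1 :=
    intervalIntegral.intervalIntegrable_deriv_of_nonneg (by simpa using hG) (by simpa using hderiv)
      fun w _ => sq_nonneg _
  rw [intervalIntegral.integral_eq_sub_of_hasDerivAt_of_le zero_le_one hG hderiv hint]
  simp [G]

theorem integral_comp_one_sub_div_one_sub (f : ℝ → ℝ) {τ : ℝ} (hτ : τ ≠ 1) :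
    ∫ u in τ..1, f ((1 - u) / (1 - τ)) = (1 - τ) * ∫ w in (0:ℝ)..1, f w := by
  have hτ' : 1 - τ ≠ 0 := sub_ne_zero.2 hτ.symm
  rw [intervalIntegral.integral_comp_sub_left (fun v => f (v / (1 - τ))),
    intervalIntegral.integral_comp_div _ hτ', sub_self, zero_div, div_self hτ', smul_eq_mul]

theorem log_div_eq_neg_log_div (a b : ℝ) : log (a / b) = -log (b / a) := by
  rw [← log_inv, inv_div]

theorem integral_log_div_one_sub {τ : ℝ} (hτ : τ ≠ 1) :
    ∫ u in τ..1, log ((1 - τ) / (1 - u)) = 1 - τ := by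
  simp_rw [log_div_eq_neg_log_div (1 - τ)]
  rw [integral_comp_one_sub_div_one_sub (fun w => -log w) hτ]
  simp

theorem integral_log_div_one_sub_sq {τ : ℝ} (hτ : τ ≠ 1) :
    ∫ u in τ..1, log ((1 - τ) / (1 - u)) ^ 2 = 2 * (1 - τ) := by
  simp_rw [log_div_eq_neg_log_div (1 - τ), neg_sq]
  rw [integral_comp_one_sub_div_one_sub (fun w => log w ^ 2) hτ, integral_log_sq_zero_one, mul_comm]

theorem abs_integral_sub_mul_integral_le {β : Type*} [MeasurableSpace β] {μ : Measure β}
    {f L : β → ℝ} {c ε : ℝ} (hf : AEStronglyMeasurable f μ) (hL : Integrable L μ)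
    (h : ∀ᵐ x ∂μ, |f x - c * L x| ≤ ε * L x) :
    |∫ x, f x ∂μ - c * ∫ x, L x ∂μ| ≤ ε * ∫ x, L x ∂μ := by
  have hcL : Integrable (fun x => c * L x) μ := hL.const_mul c
  have hfi : Integrable f μ := by
    refine (hcL.abs.add (hL.const_mul ε)).mono' hf (h.mono fun x hx => ?_)
    calc ‖f x‖ = |c * L x + (f x - c * L x)| := by rw [norm_eq_abs, add_sub_cancel]
      _ ≤ |c * L x| + ε * L x := (abs_add_le _ _).trans (by gcongr)
  rw [← integral_const_mul, ← integral_sub hfi hcL, ← integral_const_mul, ← norm_eq_abs]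
  exact norm_integral_le_of_norm_le (hL.const_mul ε) h

theorem abs_sq_sub_sq_mul_le {x y c e : ℝ} (hc : 0 ≤ c) (hy : 0 ≤ y) (h : |x - c * y| ≤ e * y) :
    |x ^ 2 - c ^ 2 * y ^ 2| ≤ (2 * c + e) * e * y ^ 2 := by
  have hsum : |x + c * y| ≤ (2 * c + e) * y :=
    calc |x + c * y| = |(x - c * y) + 2 * (c * y)| := by ring_nf
      _ ≤ |x - c * y| + 2 * (c * y) := by
          refine (abs_add_le _ _).trans ?_
          rw [abs_of_nonneg (by positivity : 0 ≤ 2 * (c * y))]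
      _ ≤ (2 * c + e) * y := by linarith
  calc |x ^ 2 - c ^ 2 * y ^ 2| = |x - c * y| * |x + c * y| := by rw [← abs_mul]; ring_nf
    _ ≤ (e * y) * ((2 * c + e) * y) := mul_le_mul h hsum (abs_nonneg _) ((abs_nonneg _).trans h)
    _ = (2 * c + e) * e * y ^ 2 := by ring

theorem abs_inv_mul_sub_le {I c e s : ℝ} (hs : 0 < s) (h : |I - c * s| ≤ e * s) :
    |s⁻¹ * I - c| ≤ e := by
  have : s⁻¹ * I - c = s⁻¹ * (I - c * s) := by field_simp
  rw [this, abs_mul, abs_of_pos (inv_pos.2 hs), inv_mul_le_iff₀ hs, mul_comm s]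
  exact h

theorem tendsto_of_forall_eventually_abs_sub_le {ι : Type*} {l : Filter ι} {f : ι → ℝ} {a : ℝ}
    {g : ℝ → ℝ} (hg : Tendsto g (𝓝[>] 0) (𝓝 0)) (h : ∀ ε > 0, ∀ᶠ i in l, |f i - a| ≤ g ε) :
    Tendsto f l (𝓝 a) := by
  refine Metric.tendsto_nhds.2 fun δ hδ => ?_
  obtain ⟨ε, hgε, hε⟩ := ((hg.eventually (gt_mem_nhds hδ)).and self_mem_nhdsWithin).exists
  exact (h ε hε).mono fun i hi => hi.trans_lt hgε

theorem tendsto_one_div_one_sub_nhdsLT_one :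
    Tendsto (fun τ : ℝ => 1 / (1 - τ)) (𝓝[<] 1) atTop := by
  have h : Tendsto (fun τ : ℝ => 1 - τ) (𝓝[<] 1) (𝓝[>] 0) := by
    refine tendsto_nhdsWithin_iff.2 ⟨?_, eventually_nhdsWithin_of_forall fun τ hτ => ?_⟩
    · exact tendsto_nhdsWithin_of_tendsto_nhds
        (by simpa using (continuous_sub_left (1:ℝ)).tendsto 1)
    · exact sub_pos.2 (mem_Iio.1 hτ)
  simpa only [one_div, Function.comp_def] using tendsto_inv_nhdsGT_zero.comp h

theorem eventually_forall_abs_le_of_tendsto {α : ℝ → ℝ} (hα : Tendsto α atTop (𝓝 0)) {ε : ℝ}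
    (hε : 0 < ε) : ∀ᶠ τ in 𝓝[<] 1, ∀ t, 1 / (1 - τ) ≤ t → |α t| ≤ ε := by
  obtain ⟨T, hT⟩ := eventually_atTop.1 (hα.eventually (Metric.closedBall_mem_nhds 0 hε))
  filter_upwards [tendsto_one_div_one_sub_nhdsLT_one.eventually (eventually_ge_atTop T)]
    with τ hτ t ht
  simpa using hT t (hτ.trans ht)

noncomputable def karamataQuantile (ξ c : ℝ) (α : ℝ → ℝ) (u : ℝ) : ℝ :=
  (1 - u) ^ (-ξ) * c * exp (∫ t in (1:ℝ)..(1 / (1 - u)), α t / t)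

section Karamata

variable {ξ c : ℝ} {α : ℝ → ℝ}

theorem intervalIntegrable_div_id_of_one_le (hint : ∀ a b, 1 ≤ a → IntervalIntegrable α volume a b)
    {a b : ℝ} (ha : 1 ≤ a) (hb : 1 ≤ b) : IntervalIntegrable (fun t => α t / t) volume a b :=
  (hint a b ha).div_id fun h => by rcases mem_uIcc.1 h with ⟨h, -⟩ | ⟨h, -⟩ <;> linarith

theorem continuousOn_karamataQuantile (hint : ∀ a b, 1 ≤ a → IntervalIntegrable α volume a b) :
    ContinuousOn (karamataQuantile ξ c α) (Ico 0 1) := by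
  have hinner : ContinuousOn (fun u : ℝ => 1 / (1 - u)) (Ico 0 1) :=
    continuousOn_const.div (by fun_prop) fun u hu => by linarith [hu.2]
  have hprim := continuousOn_primitive_Ici fun b hb =>
    intervalIntegrable_div_id_of_one_le hint le_rfl hb
  refine ContinuousOn.mul ?_ (continuous_exp.comp_continuousOn
    (hprim.comp hinner fun u hu => one_le_one_div_one_sub hu.1 hu.2))
  exact (ContinuousOn.rpow_const (by fun_prop) fun u hu => Or.inl (by linarith [hu.2])).mul
    continuousOn_const

theorem karamataQuantile_ne_zero (hc : c ≠ 0) {u : ℝ} (hu : u < 1) :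
    karamataQuantile ξ c α u ≠ 0 := by
  have : 0 < 1 - u := by linarith
  unfold karamataQuantile
  positivity

theorem log_karamataQuantile (hc : c ≠ 0) {u : ℝ} (hu : u < 1) :
    log (karamataQuantile ξ c α u) =
      -ξ * log (1 - u) + log c + ∫ t in (1:ℝ)..(1 / (1 - u)), α t / t := by
  have h1u : 0 < 1 - u := by linarith
  rw [karamataQuantile, log_mul (by positivity) (exp_ne_zero _),
    log_mul (rpow_pos_of_pos h1u _).ne' hc, log_exp, log_rpow h1u]

theorem log_karamataQuantile_div (hc : c ≠ 0)
    (hint : ∀ a b, 1 ≤ a → IntervalIntegrable α volume a b) {τ u : ℝ} (hτ : 0 ≤ τ) (hτu : τ ≤ u)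
    (hu : u < 1) :
    log (karamataQuantile ξ c α u / karamataQuantile ξ c α τ) =
      ξ * log ((1 - τ) / (1 - u)) + ∫ t in (1 / (1 - τ))..(1 / (1 - u)), α t / t := by
  have hτ1 : τ < 1 := hτu.trans_lt hu
  have hτ' := one_le_one_div_one_sub hτ hτ1
  have hadd := intervalIntegral.integral_add_adjacent_intervals
    (intervalIntegrable_div_id_of_one_le hint le_rfl hτ')
    (intervalIntegrable_div_id_of_one_le hint hτ' (one_le_one_div_one_sub (hτ.trans hτu) hu))
  rw [log_div (karamataQuantile_ne_zero hc hu) (karamataQuantile_ne_zero hc hτ1),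
    log_karamataQuantile hc hu, log_karamataQuantile hc hτ1, ← hadd,
    log_div (by linarith) (by linarith)]
  ring

theorem abs_log_karamataQuantile_div_sub_le (hc : c ≠ 0)
    (hint : ∀ a b, 1 ≤ a → IntervalIntegrable α volume a b) {ε τ u : ℝ} (hτ : 0 ≤ τ) (hτu : τ ≤ u)
    (hu : u < 1) (htail : ∀ t, 1 / (1 - τ) ≤ t → |α t| ≤ ε) :
    |log (karamataQuantile ξ c α u / karamataQuantile ξ c α τ) - ξ * log ((1 - τ) / (1 - u))|
      ≤ ε * log ((1 - τ) / (1 - u)) := by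
  have h1τ : 0 < 1 - τ := by linarith
  have h1u : 0 < 1 - u := by linarith
  rw [log_karamataQuantile_div hc hint hτ hτu hu, add_sub_cancel_left]
  have hle : 1 / (1 - τ) ≤ 1 / (1 - u) := one_div_le_one_div_of_le h1u (by linarith)
  convert abs_integral_div_self_le (by positivity) hle fun t ht => htail t ht.1 using 3
  field_simp

theorem abs_hill_moments_sub_le (hξ : 0 ≤ ξ) (hc : c ≠ 0)
    (hint : ∀ a b, 1 ≤ a → IntervalIntegrable α volume a b) {Q : ℝ → ℝ}
    (hQ : EqOn Q (karamataQuantile ξ c α) (Ioo 0 1)) {ε τ : ℝ} (hτ : τ ∈ Ioo 0 1)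
    (htail : ∀ t, 1 / (1 - τ) ≤ t → |α t| ≤ ε) :
    |(1 - τ)⁻¹ * (∫ u in τ..1, log (Q u / Q τ)) - ξ| ≤ ε ∧
      |(1 - τ)⁻¹ * (∫ u in τ..1, log (Q u / Q τ) ^ 2) - 2 * ξ ^ 2| ≤ 2 * ((2 * ξ + ε) * ε) := by
  obtain ⟨hτ0, hτ1⟩ := hτ
  have hs : 0 < 1 - τ := by linarith
  set μ := volume.restrict (Ioo τ 1)
  have hset : ∀ f : ℝ → ℝ, ∫ u in τ..1, f u = ∫ u, f u ∂μ := fun f => by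
    rw [intervalIntegral.integral_of_le hτ1.le, integral_Ioc_eq_integral_Ioo]
  set X := fun u => log (Q u / Q τ)
  set L := fun u => log ((1 - τ) / (1 - u))
  have hLnonneg : ∀ u ∈ Ioo τ 1, 0 ≤ L u := fun u hu =>
    log_nonneg ((one_le_div (by linarith [hu.2])).2 (by linarith [hu.1]))
  have hbound : ∀ u ∈ Ioo τ 1, |X u - ξ * L u| ≤ ε * L u := fun u hu => by
    simp only [X, L, hQ ⟨hτ0.trans hu.1, hu.2⟩, hQ ⟨hτ0, hτ1⟩]
    exact abs_log_karamataQuantile_div_sub_le hc hint hτ0.le hu.1.le hu.2 htail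
  have hX : AEStronglyMeasurable X μ := by
    refine ContinuousOn.aestronglyMeasurable ?_ measurableSet_Ioo
    have hsub : Ioo τ 1 ⊆ Ico 0 1 := fun u hu => ⟨hτ0.le.trans hu.1.le, hu.2⟩
    refine ContinuousOn.congr (f := fun u => log (karamataQuantile ξ c α u /
      karamataQuantile ξ c α τ)) ?_ fun u hu => ?_
    · exact (((continuousOn_karamataQuantile hint).mono hsub).div_const _).log fun u hu =>
        div_ne_zero (karamataQuantile_ne_zero hc hu.2) (karamataQuantile_ne_zero hc hτ1)
    · simp only [X, hQ ⟨hτ0.trans hu.1, hu.2⟩, hQ ⟨hτ0, hτ1⟩]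
  have hL1 : ∫ u, L u ∂μ = 1 - τ := by rw [← hset]; exact integral_log_div_one_sub hτ1.ne
  have hL2 : ∫ u, L u ^ 2 ∂μ = 2 * (1 - τ) := by
    rw [← hset]; exact integral_log_div_one_sub_sq hτ1.ne
  have h1 := abs_integral_sub_mul_integral_le hX (.of_integral_ne_zero (by rw [hL1]; exact hs.ne'))
    (ae_restrict_of_forall_mem measurableSet_Ioo hbound)
  have h2 := abs_integral_sub_mul_integral_le (hX.pow 2 : AEStronglyMeasurable (X · ^ 2) μ)
    (.of_integral_ne_zero (by rw [hL2]; positivity))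
    (ae_restrict_of_forall_mem measurableSet_Ioo fun u hu =>
      abs_sq_sub_sq_mul_le hξ (hLnonneg u hu) (hbound u hu))
  rw [hL1] at h1
  rw [hL2] at h2
  rw [hset, hset]
  refine ⟨abs_inv_mul_sub_le hs h1, abs_inv_mul_sub_le hs ?_⟩
  rw [show 2 * ξ ^ 2 * (1 - τ) = ξ ^ 2 * (2 * (1 - τ)) by ring,
    show 2 * ((2 * ξ + ε) * ε) * (1 - τ) = (2 * ξ + ε) * ε * (2 * (1 - τ)) by ring]
  exact h2

end Karamata

theorem hill_population_limits_general
    (ξ c : ℝ) (hξ : 0 < ξ) (hc : 0 < c)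
    (α : ℝ → ℝ)
    (hint : ∀ a b : ℝ, 1 ≤ a → IntervalIntegrable α volume a b)
    (hα : Filter.Tendsto α Filter.atTop (nhds 0))
    (Q : ℝ → ℝ)
    (hQ : ∀ u ∈ Set.Ioo (0:ℝ) 1,
      Q u = (1 - u) ^ (-ξ) * c *
        Real.exp (∫ t in (1:ℝ)..(1 / (1 - u)), α t / t)) :
    Filter.Tendsto
      (fun τ => (1 - τ)⁻¹ * ∫ u in τ..1, Real.log (Q u / Q τ))
      (nhdsWithin 1 (Set.Iio 1)) (nhds ξ) ∧
    Filter.Tendsto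
      (fun τ => (1 - τ)⁻¹ * ∫ u in τ..1, (Real.log (Q u / Q τ)) ^ 2)
      (nhdsWithin 1 (Set.Iio 1)) (nhds (2 * ξ ^ 2)) := by
  have hbounds : ∀ ε > 0, ∀ᶠ τ in 𝓝[<] 1,
      |(1 - τ)⁻¹ * (∫ u in τ..1, log (Q u / Q τ)) - ξ| ≤ ε ∧
      |(1 - τ)⁻¹ * (∫ u in τ..1, log (Q u / Q τ) ^ 2) - 2 * ξ ^ 2| ≤ 2 * ((2 * ξ + ε) * ε) :=
    fun ε hε => by
      filter_upwards [eventually_forall_abs_le_of_tendsto hα hε, Ioo_mem_nhdsLT zero_lt_one]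
        with τ htail hτ
      exact abs_hill_moments_sub_le hξ.le hc.ne' hint (fun u hu => hQ u hu) hτ htail
  constructor
  · refine tendsto_of_forall_eventually_abs_sub_le (g := id) ?_ fun ε hε =>
      (hbounds ε hε).mono fun _ h => h.1
    exact tendsto_nhdsWithin_of_tendsto_nhds tendsto_id
  · refine tendsto_of_forall_eventually_abs_sub_le (g := fun ε => 2 * ((2 * ξ + ε) * ε)) ?_
      fun ε hε => (hbounds ε hε).mono fun _ h => h.2
    exact tendsto_nhdsWithin_of_tendsto_nhds (Continuous.tendsto' (by fun_prop) 0 0 (by simp))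

/-- Population first and second moments of the Hill-type statistic for a
heavy-tailed Karamata quantile function with extreme value index `ξ > 0`:
as `τ → 1⁻`, `(1−τ)⁻¹ ∫_τ^1 log(Q(u)/Q(τ)) du → ξ` and
`(1−τ)⁻¹ ∫_τ^1 (log(Q(u)/Q(τ)))² du → 2ξ²`. -/
theorem hill_population_limits
    (ξ c : ℝ) (hξ : 0 < ξ) (hc : 0 < c)
    (α : ℝ → ℝ) (hmeas : Measurable α)
    (hint : ∀ a b : ℝ, 1 ≤ a → IntervalIntegrable α volume a b)
    (hα : Filter.Tendsto α Filter.atTop (nhds 0))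
    (Q : ℝ → ℝ)
    (hQ : ∀ u ∈ Set.Ioo (0:ℝ) 1,
      Q u = (1 - u) ^ (-ξ) * c *
        Real.exp (∫ t in (1:ℝ)..(1 / (1 - u)), α t / t)) :
    Filter.Tendsto
      (fun τ => (1 - τ)⁻¹ * ∫ u in τ..1, Real.log (Q u / Q τ))
      (nhdsWithin 1 (Set.Iio 1)) (nhds ξ) ∧
    Filter.Tendsto
      (fun τ => (1 - τ)⁻¹ * ∫ u in τ..1, (Real.log (Q u / Q τ)) ^ 2)
      (nhdsWithin 1 (Set.Iio 1)) (nhds (2 * ξ ^ 2)) :=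
  hill_population_limits_general ξ c hξ hc α hint hα Q hQ
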